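/- arXiv:0909.4906 — 6 statements merged into one kernel-verified Lean document; each statement's English description precedes it below -/
import Mathlib

section
/- All equilibrium points of the McGehee system lie on the collision manifold r = 0: if (r,v,θ,u) with r > 0 satisfies rv = 0, ((β-2)/2)v² + r^(β-1) + 2hr^β - b(β-2)/Δ^(β/2) = 0, u = 0, and the energy relation u² + v² - 2r^(β-1) - 2b/Δ^(β/2) = 2hr^β, then a contradiction follows; i.e., no equilibria with r > 0 exist. -/
open Real

/-- No equilibria of the McGehee system exist with r > 0:
the equilibrium conditions together with the energy relation are contradictory. -/
theorem stmt5 (β b μ h r v θ u : ℝ) (hβ : 2 < β) (hβ4 : β ≠ 4) (hb : 0 < b) (hμ : 1 ≤ μ)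
    (Δ : ℝ) (hΔ : Δ = μ * Real.cos θ ^ 2 + Real.sin θ ^ 2)
    (hr : 0 < r)
    (e1 : r * v = 0)
    (e2 : (β - 2) / 2 * v ^ 2 + r ^ (β - 1) + 2 * h * r ^ β - b * (β - 2) / Δ ^ (β / 2) = 0)
    (e3 : u = 0)
    (energy : u ^ 2 + v ^ 2 - 2 * r ^ (β - 1) - 2 * b / Δ ^ (β / 2) = 2 * h * r ^ β) :
    False := by
  have hv : v = 0 := by
    rcases mul_eq_zero.1 e1 with h0 | h0
    · exact absurd h0 hr.ne'
    · exact h0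
  have hΔ1 : (1:ℝ) ≤ Δ := by
    rw [hΔ]
    nlinarith [sin_sq_add_cos_sq θ, sq_nonneg (Real.cos θ)]
  have hD : 0 < Δ ^ (β / 2) := Real.rpow_pos_of_pos (by linarith) _
  have hP : 0 < r ^ (β - 1) := Real.rpow_pos_of_pos hr _
  subst e3 hv
  field_simp at e2 energy
  nlinarith [mul_pos hP hD, mul_pos hb (sub_pos.2 hβ)]
end

section
/- The equilibria of the flow on the collision manifold C are exactly the points with u = 0, v = ±√(2b/Δ(θ)^(β/2)), and θ ∈ {0, π/2, π, 3π/2}. -/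
open Real

/-- The equilibria of the flow on the collision manifold C are exactly the points with
u = 0, v = ±√(2b/Δ^(β/2)) and θ ∈ {0, π/2, π, 3π/2} (mod 2π). -/
theorem stmt7 (β b μ v θ u : ℝ) (hβ : 2 < β) (hb : 0 < b) (hμ : 1 < μ)
    (Δ : ℝ) (hΔ : Δ = μ * Real.cos θ ^ 2 + Real.sin θ ^ 2)
    (hC : u ^ 2 + v ^ 2 = 2 * b / Δ ^ (β / 2)) :
    (-((β - 2) / 2 * u ^ 2) = 0 ∧ u = 0 ∧
        (β - 2) / 2 * u * v + b * β * (μ - 1) * Real.sin (2 * θ) / (2 * Δ ^ ((β + 2) / 2)) = 0)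
      ↔ (u = 0 ∧
          (v = Real.sqrt (2 * b / Δ ^ (β / 2)) ∨ v = -Real.sqrt (2 * b / Δ ^ (β / 2))) ∧
          ∃ n : ℤ, θ = n * (Real.pi / 2)) := by
  have hΔ1 : (1:ℝ) ≤ Δ := by
    have h1 : Δ = 1 + (μ - 1) * Real.cos θ ^ 2 := by
      rw [hΔ]; have := Real.sin_sq_add_cos_sq θ; nlinarith
    nlinarith [sq_nonneg (Real.cos θ)]
  have hΔ0 : (0:ℝ) < Δ := lt_of_lt_of_le one_pos hΔ1
  have hpow : (0:ℝ) < Δ ^ ((β + 2) / 2) := Real.rpow_pos_of_pos hΔ0 _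
  constructor
  · rintro ⟨-, hu, h3⟩
    refine ⟨hu, ?_, ?_⟩
    · have hv2 : v ^ 2 = 2 * b / Δ ^ (β / 2) := by
        rw [hu] at hC; simpa using hC
      have := Real.sqrt_sq_eq_abs v
      rw [hv2] at this
      rcases abs_cases v with ⟨h, -⟩ | ⟨h, -⟩
      · left; rw [this]; exact h.symm
      · right; rw [this, h]; ring
    · have hsin : Real.sin (2 * θ) = 0 := by
        rw [hu] at h3
        have hne : (0:ℝ) < b * β * (μ - 1) := mul_pos (mul_pos hb (by linarith)) (by linarith)
        have hX : b * β * (μ - 1) * Real.sin (2 * θ) / (2 * Δ ^ ((β + 2) / 2)) = 0 := by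
          linarith [h3]
        have hnum : b * β * (μ - 1) * Real.sin (2 * θ) = 0 := by
          rcases div_eq_zero_iff.mp hX with h | h
          · exact h
          · exact absurd h (by positivity)
        rcases mul_eq_zero.mp hnum with h | h
        · exact absurd h (ne_of_gt hne)
        · exact h
      rcases Real.sin_eq_zero_iff.mp hsin with ⟨n, hn⟩
      exact ⟨n, by linarith⟩
  · rintro ⟨hu, -, n, hθ⟩
    refine ⟨by rw [hu]; ring, hu, ?_⟩
    have hsin : Real.sin (2 * θ) = 0 := by
      rw [hθ]
      have : 2 * ((n : ℝ) * (Real.pi / 2)) = n * Real.pi := by ring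
      rw [this, Real.sin_int_mul_pi]
    rw [hu, hsin]
    ring
end

section
/- The Poisson bracket of H₂ = p_r²/2 + p_θ²/(2r²) - 1/r - b/(r²(1+ε cos²θ)) and G = p_θ²/2 - b/(1+ε cos²θ) vanishes: {H₂, G} = 0. -/
open Real

noncomputable def H2fun (b ε : ℝ) (r θ pr pθ : ℝ) : ℝ :=
  pr ^ 2 / 2 + pθ ^ 2 / (2 * r ^ 2) - 1 / r - b / (r ^ 2 * (1 + ε * Real.cos θ ^ 2))

noncomputable def Gfun (b ε : ℝ) (r θ pr pθ : ℝ) : ℝ :=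
  pθ ^ 2 / 2 - b / (1 + ε * Real.cos θ ^ 2)

lemma denom_pos (ε θ : ℝ) (hε : 0 ≤ ε) : 0 < 1 + ε * Real.cos θ ^ 2 := by
  have : 0 ≤ ε * Real.cos θ ^ 2 := mul_nonneg hε (sq_nonneg _)
  linarith

lemma hasDerivAt_u (ε θ : ℝ) :
    HasDerivAt (fun x => 1 + ε * Real.cos x ^ 2)
      (ε * (2 * Real.cos θ * (-Real.sin θ))) θ := by
  have h : HasDerivAt (fun x => Real.cos x ^ 2) (2 * Real.cos θ ^ 1 * (-Real.sin θ)) θ :=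
    (Real.hasDerivAt_cos θ).pow 2
  have := ((h.const_mul ε).const_add 1)
  simpa [pow_one, mul_comm, mul_assoc, mul_left_comm] using this

lemma deriv_H_theta (b ε r θ pr pθ : ℝ) (hr : r ≠ 0) (hε : 0 ≤ ε) :
    deriv (fun x => H2fun b ε r x pr pθ) θ =
      b * (r ^ 2 * (ε * (2 * Real.cos θ * (-Real.sin θ)))) /
        (r ^ 2 * (1 + ε * Real.cos θ ^ 2)) ^ 2 := by
  have hD := (denom_pos ε θ hε).ne'
  have hne : r ^ 2 * (1 + ε * Real.cos θ ^ 2) ≠ 0 := by positivity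
  have h1 : HasDerivAt (fun x => r ^ 2 * (1 + ε * Real.cos x ^ 2))
      (r ^ 2 * (ε * (2 * Real.cos θ * (-Real.sin θ)))) θ := by
    simpa [mul_comm, mul_assoc, mul_left_comm] using (hasDerivAt_u ε θ).const_mul (r ^ 2)
  have h2 : HasDerivAt (fun x => b / (r ^ 2 * (1 + ε * Real.cos x ^ 2)))
      ((0 * (r ^ 2 * (1 + ε * Real.cos θ ^ 2)) -
        b * (r ^ 2 * (ε * (2 * Real.cos θ * (-Real.sin θ))))) /
        (r ^ 2 * (1 + ε * Real.cos θ ^ 2)) ^ 2) θ :=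
    (hasDerivAt_const θ b).div h1 hne
  have h3 : HasDerivAt (fun x => H2fun b ε r x pr pθ)
      (0 - (0 * (r ^ 2 * (1 + ε * Real.cos θ ^ 2)) -
        b * (r ^ 2 * (ε * (2 * Real.cos θ * (-Real.sin θ))))) /
        (r ^ 2 * (1 + ε * Real.cos θ ^ 2)) ^ 2) θ := by
    unfold H2fun
    exact (hasDerivAt_const θ (pr ^ 2 / 2 + pθ ^ 2 / (2 * r ^ 2) - 1 / r)).sub h2
  rw [h3.deriv]; ring

lemma deriv_G_theta (b ε r θ pr pθ : ℝ) (hε : 0 ≤ ε) :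
    deriv (fun x => Gfun b ε r x pr pθ) θ =
      b * (ε * (2 * Real.cos θ * (-Real.sin θ))) / (1 + ε * Real.cos θ ^ 2) ^ 2 := by
  have hD := (denom_pos ε θ hε).ne'
  have h2 : HasDerivAt (fun x => b / (1 + ε * Real.cos x ^ 2))
      ((0 * (1 + ε * Real.cos θ ^ 2) - b * (ε * (2 * Real.cos θ * (-Real.sin θ)))) /
        (1 + ε * Real.cos θ ^ 2) ^ 2) θ :=
    (hasDerivAt_const θ b).div (hasDerivAt_u ε θ) hD
  have h3 : HasDerivAt (fun x => Gfun b ε r x pr pθ)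
      (0 - (0 * (1 + ε * Real.cos θ ^ 2) - b * (ε * (2 * Real.cos θ * (-Real.sin θ)))) /
        (1 + ε * Real.cos θ ^ 2) ^ 2) θ := by
    unfold Gfun
    exact (hasDerivAt_const θ (pθ ^ 2 / 2)).sub h2
  rw [h3.deriv]; ring

lemma deriv_H_ptheta (b ε r θ pr pθ : ℝ) (hr : r ≠ 0) :
    deriv (fun x => H2fun b ε r θ pr x) pθ = pθ / r ^ 2 := by
  have hne : (2 : ℝ) * r ^ 2 ≠ 0 := by positivity
  have h1 : HasDerivAt (fun x : ℝ => x ^ 2 / (2 * r ^ 2)) (2 * pθ / (2 * r ^ 2)) pθ := by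
    simpa [pow_one] using
      (((hasDerivAt_pow 2 pθ)).div_const (2 * r ^ 2))
  have h3 : HasDerivAt (fun x => H2fun b ε r θ pr x)
      (0 + 2 * pθ / (2 * r ^ 2) - 0 - 0) pθ := by
    unfold H2fun
    exact ((((hasDerivAt_const pθ (pr ^ 2 / 2)).add h1).sub
      (hasDerivAt_const pθ (1 / r))).sub
      (hasDerivAt_const pθ (b / (r ^ 2 * (1 + ε * Real.cos θ ^ 2)))))
  rw [h3.deriv]; field_simp; ring

lemma deriv_G_ptheta (b ε r θ pr pθ : ℝ) :
    deriv (fun x => Gfun b ε r θ pr x) pθ = pθ := by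
  have h1 : HasDerivAt (fun x : ℝ => x ^ 2 / 2) (2 * pθ / 2) pθ := by
    simpa [pow_one] using ((hasDerivAt_pow 2 pθ)).div_const 2
  have h3 : HasDerivAt (fun x => Gfun b ε r θ pr x) (2 * pθ / 2 - 0) pθ := by
    unfold Gfun
    exact h1.sub (hasDerivAt_const pθ (b / (1 + ε * Real.cos θ ^ 2)))
  rw [h3.deriv]; ring

/-- The canonical Poisson bracket of H₂ and G vanishes: {H₂, G} = 0. -/
theorem stmt11 (b ε : ℝ) (hb : 0 < b) (hε : 0 ≤ ε) :
    ∀ r θ pr pθ : ℝ, 0 < r →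
      (deriv (fun x => H2fun b ε x θ pr pθ) r) * (deriv (fun x => Gfun b ε r θ x pθ) pr)
        - (deriv (fun x => H2fun b ε r θ x pθ) pr) * (deriv (fun x => Gfun b ε x θ pr pθ) r)
        + (deriv (fun x => H2fun b ε r x pr pθ) θ) * (deriv (fun x => Gfun b ε r θ pr x) pθ)
        - (deriv (fun x => H2fun b ε r θ pr x) pθ) * (deriv (fun x => Gfun b ε r x pr pθ) θ)
        = 0 := by
  intro r θ pr pθ hr
  have hr' : r ≠ 0 := ne_of_gt hr
  have hD := (denom_pos ε θ hε).ne'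
  have hGpr : deriv (fun x => Gfun b ε r θ x pθ) pr = 0 := by
    simp [Gfun]
  have hGr : deriv (fun x => Gfun b ε x θ pr pθ) r = 0 := by
    simp [Gfun]
  rw [hGpr, hGr, deriv_H_theta b ε r θ pr pθ hr' hε, deriv_G_theta b ε r θ pr pθ hε,
    deriv_H_ptheta b ε r θ pr pθ hr', deriv_G_ptheta]
  field_simp
  ring
end

section
/- All equilibrium points of the infinity-manifold system lie on ρ = 0 and are given by ρ = 0, v̄ = ±√2, ū = 0 (any θ): if a point with the energy relation ū² + v̄² = 2 + (2b/Δ^(β/2))ρ^(β-1) satisfies ρv̄ = 0, -½v̄² - b(β-2)ρ^(β-1)/Δ^(β/2) + 1 = 0, ū = 0, and -½ūv̄ + (bβ(μ-1)sin2θ/(2Δ^((β+2)/2)))ρ^(β-1) = 0, then ρ = 0 and v̄ = ±√2. -/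
open Real

/-- All equilibrium points of the infinity-manifold system lie on ρ = 0 and are
given by ρ = 0, v̄ = ±√2, ū = 0. -/
theorem stmt15 (β b μ ρ vb θ ub : ℝ) (hβ : 2 < β) (hb : 0 < b) (hμ : 1 ≤ μ) (hρ : 0 ≤ ρ)
    (Δ : ℝ) (hΔ : Δ = μ * Real.cos θ ^ 2 + Real.sin θ ^ 2)
    (energy : ub ^ 2 + vb ^ 2 = 2 + 2 * b / Δ ^ (β / 2) * ρ ^ (β - 1))
    (e1 : ρ * vb = 0)
    (e2 : -(1 / 2) * vb ^ 2 - b * (β - 2) / Δ ^ (β / 2) * ρ ^ (β - 1) + 1 = 0)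
    (e3 : ub = 0)
    (e4 : -(1 / 2) * ub * vb
      + b * β * (μ - 1) * Real.sin (2 * θ) / (2 * Δ ^ ((β + 2) / 2)) * ρ ^ (β - 1) = 0) :
    ρ = 0 ∧ (vb = Real.sqrt 2 ∨ vb = -Real.sqrt 2) := by
  subst e3
  rcases mul_eq_zero.mp e1 with hρ0 | hv0
  · subst hρ0
    rw [Real.zero_rpow (by linarith : β - 1 ≠ 0)] at energy
    have hv2 : vb ^ 2 = Real.sqrt 2 ^ 2 := by
      rw [Real.sq_sqrt (by norm_num : (2:ℝ) ≥ 0)]; linarith [energy]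
    exact ⟨rfl, sq_eq_sq_iff_eq_or_eq_neg.mp hv2⟩
  · exfalso
    subst hv0
    set t : ℝ := b / Δ ^ (β / 2) * ρ ^ (β - 1) with ht
    have h1 : 2 * t = -2 := by linear_combination -energy
    have h2 : (β - 2) * t = 1 := by linear_combination -e2
    nlinarith
end

section
/- The Melnikov integral I₂(β) = 2^(β-1) p^(3/2-β) (β/2) ∫_{-∞}^{∞} (1+η²)^(1-β) [2(1-η²)²/(1+η²)² - 1] dη, for β > 3/2 and p > 0, equals √π · 2^(β-2) p^(3/2-β) Γ(β+½) (β²-5β+6) / [(β-1)(β-3/2)(β-1/2)Γ(β-1)]; in particular I₂(β) = 0 if and only if β = 2 or β = 3. -/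
open Real MeasureTheory Set

lemma laplace_rpow {s c : ℝ} (hs : 0 < s) (hc : 0 < c) :
    ∫ t in Ioi (0:ℝ), t ^ (s - 1) * Real.exp (-(c * t)) = Real.Gamma s / c ^ s := by
  have h := integral_comp_mul_left_Ioi (fun y => Real.exp (-y) * y ^ (s - 1)) 0 hc
  rw [mul_zero, ← Real.Gamma_eq_integral hs] at h
  have h2 : ∀ x ∈ Ioi (0:ℝ), Real.exp (-(c * x)) * (c * x) ^ (s - 1)
      = c ^ (s - 1) * (x ^ (s - 1) * Real.exp (-(c * x))) := by
    intro x hx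
    rw [Real.mul_rpow hc.le (le_of_lt hx)]
    ring
  rw [setIntegral_congr_fun measurableSet_Ioi h2, integral_const_mul _ _, smul_eq_mul] at h
  have hc1 : (c:ℝ) ^ (s-1) ≠ 0 := (Real.rpow_pos_of_pos hc _).ne'
  have hcs : c ^ s = c ^ (s-1) * c := by
    rw [← Real.rpow_add_one hc.ne' (s-1)]; ring_nf
  rw [hcs]
  field_simp at h ⊢
  linarith [h]

lemma integrable_one_add_sq {s : ℝ} (hs : 1/2 < s) :
    Integrable (fun x : ℝ => (1 + x ^ 2) ^ (-s)) := by
  have h := integrable_rpow_neg_one_add_norm_sq (E := ℝ) (μ := volume) (r := 2*s)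
    (by simp; linarith)
  refine h.congr (Filter.Eventually.of_forall fun x => ?_)
  simp only [Real.norm_eq_abs, sq_abs]; rw [show -(2*s)/2 = -s by ring]

lemma integral_one_add_sq_rpow {s : ℝ} (hs : 1/2 < s) :
    ∫ x : ℝ, (1 + x ^ 2) ^ (-s) = Real.sqrt π * Real.Gamma (s - 1/2) / Real.Gamma s := by
  have hs0 : 0 < s := by linarith
  have hΓpos : 0 < Real.Gamma s := Real.Gamma_pos_of_pos hs0
  set F : ℝ → ℝ → ℝ := fun x t => t ^ (s - 1) * Real.exp (-((1 + x ^ 2) * t)) with hF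
  have hc : ∀ x : ℝ, (0:ℝ) < 1 + x ^ 2 := fun x => by positivity
  have hinner : ∀ x : ℝ, ∫ t in Ioi (0:ℝ), F x t = Real.Gamma s * (1 + x ^ 2) ^ (-s) := by
    intro x
    rw [hF]
    rw [laplace_rpow hs0 (hc x), Real.rpow_neg (hc x).le, div_eq_mul_inv]
  have hFnn : ∀ x : ℝ, ∀ t ∈ Ioi (0:ℝ), 0 ≤ F x t := by
    intro x t ht
    have : (0:ℝ) ≤ t := (le_of_lt ht)
    positivity
  have hslice : ∀ x : ℝ, IntegrableOn (F x) (Ioi 0) := by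
    intro x
    refine MeasureTheory.Integrable.mono (Real.GammaIntegral_convergent hs0) ?_ ?_
    · apply Measurable.aestronglyMeasurable
      fun_prop
    · filter_upwards [ae_restrict_mem measurableSet_Ioi] with t ht
      have ht0 : (0:ℝ) < t := ht
      rw [Real.norm_of_nonneg (hFnn x t ht), Real.norm_of_nonneg (by positivity)]
      have : Real.exp (-((1 + x ^ 2) * t)) ≤ Real.exp (-t) := by
        apply Real.exp_le_exp.mpr
        nlinarith [sq_nonneg x]
      calc t ^ (s-1) * Real.exp (-((1 + x ^ 2) * t)) ≤ t ^ (s-1) * Real.exp (-t) :=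
            mul_le_mul_of_nonneg_left this (Real.rpow_nonneg ht0.le _)
        _ = Real.exp (-t) * t ^ (s-1) := mul_comm _ _
  have hmeas : AEStronglyMeasurable (Function.uncurry F)
      (volume.prod (volume.restrict (Ioi 0))) := by
    apply Measurable.aestronglyMeasurable
    apply Measurable.mul
    · fun_prop
    · fun_prop
  have hint : Integrable (Function.uncurry F) (volume.prod (volume.restrict (Ioi 0))) := by
    rw [integrable_prod_iff hmeas]
    constructor
    · exact Filter.Eventually.of_forall fun x => hslice x
    · have hval : ∀ x : ℝ, ∫ t in Ioi (0:ℝ), ‖F x t‖ = Real.Gamma s * (1 + x ^ 2) ^ (-s) := by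
        intro x
        rw [← hinner x]
        refine integral_congr_ae ?_
        filter_upwards [ae_restrict_mem measurableSet_Ioi] with t ht
        exact Real.norm_of_nonneg (hFnn x t ht)
      exact (((integrable_one_add_sq hs).const_mul (Real.Gamma s)).congr
        (Filter.Eventually.of_forall fun x => (hval x).symm))
  have key : Real.Gamma s * ∫ x : ℝ, (1 + x ^ 2) ^ (-s)
      = Real.sqrt π * Real.Gamma (s - 1/2) := by
    calc Real.Gamma s * ∫ x : ℝ, (1 + x ^ 2) ^ (-s)
        = ∫ x : ℝ, ∫ t in Ioi (0:ℝ), F x t := by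
          rw [← integral_const_mul]
          exact integral_congr_ae (Filter.Eventually.of_forall fun x => (hinner x).symm)
      _ = ∫ t in Ioi (0:ℝ), ∫ x : ℝ, F x t := integral_integral_swap hint
      _ = ∫ t in Ioi (0:ℝ), Real.sqrt π * (Real.exp (-t) * t ^ ((s - 1/2) - 1)) := by
          refine setIntegral_congr_fun measurableSet_Ioi fun t ht => ?_
          have ht0 : (0:ℝ) < t := ht
          have h1 : ∀ x : ℝ, F x t = (t ^ (s-1) * Real.exp (-t)) * Real.exp (-t * x ^ 2) := by
            intro x
            show t ^ (s - 1) * Real.exp (-((1 + x ^ 2) * t)) = _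
            rw [mul_assoc, ← Real.exp_add]
            ring_nf
          rw [integral_congr_ae (Filter.Eventually.of_forall h1), integral_const_mul,
            integral_gaussian]
          have hsq : Real.sqrt (π / t) = Real.sqrt π / t ^ ((1:ℝ)/2) := by
            rw [Real.sqrt_div Real.pi_pos.le, Real.sqrt_eq_rpow t]
          rw [hsq, eq_comm, show (s - 1/2 - 1) = (s-1) + (-(1/2)) by ring,
            Real.rpow_add ht0, Real.rpow_neg ht0.le]
          have hne : t ^ ((1:ℝ)/2) ≠ 0 := (Real.rpow_pos_of_pos ht0 _).ne'
          field_simp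

      _ = Real.sqrt π * Real.Gamma (s - 1/2) := by
          rw [integral_const_mul, ← Real.Gamma_eq_integral (by linarith : (0:ℝ) < s - 1/2)]
  rw [eq_div_iff hΓpos.ne']
  linarith [key]

set_option maxHeartbeats 1000000 in
/-- The Melnikov integral I₂(β) equals the explicit Gamma-function expression,
and vanishes if and only if β = 2 or β = 3. -/
theorem stmt18 (β p : ℝ) (hβ : 3 / 2 < β) (hp : 0 < p) :
    ((2 : ℝ) ^ (β - 1) * p ^ (3 / 2 - β) * (β / 2) *
        (∫ η : ℝ, (1 + η ^ 2) ^ (1 - β) * (2 * (1 - η ^ 2) ^ 2 / (1 + η ^ 2) ^ 2 - 1))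
      = Real.sqrt Real.pi * (2 : ℝ) ^ (β - 2) * p ^ (3 / 2 - β) * Real.Gamma (β + 1 / 2)
          * (β ^ 2 - 5 * β + 6)
        / ((β - 1) * (β - 3 / 2) * (β - 1 / 2) * Real.Gamma (β - 1))) ∧
    ((2 : ℝ) ^ (β - 1) * p ^ (3 / 2 - β) * (β / 2) *
        (∫ η : ℝ, (1 + η ^ 2) ^ (1 - β) * (2 * (1 - η ^ 2) ^ 2 / (1 + η ^ 2) ^ 2 - 1)) = 0
      ↔ β = 2 ∨ β = 3) := by
  have h1 : (1:ℝ)/2 < β - 1 := by linarith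
  have h2 : (1:ℝ)/2 < β := by linarith
  have h3 : (1:ℝ)/2 < β + 1 := by linarith
  have i1 := integrable_one_add_sq h1
  have i2 := integrable_one_add_sq h2
  have i3 := integrable_one_add_sq h3
  have hβ0 : (0:ℝ) < β := by linarith
  have hb1 : (0:ℝ) < β - 1 := by linarith
  have hb32 : (0:ℝ) < β - 3/2 := by linarith
  have hb12 : (0:ℝ) < β - 1/2 := by linarith
  have hG1 : 0 < Real.Gamma (β - 3/2) := Real.Gamma_pos_of_pos hb32
  have hG2 : 0 < Real.Gamma (β - 1) := Real.Gamma_pos_of_pos hb1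
  have hpt : ∀ η : ℝ, (1 + η ^ 2) ^ (1 - β) * (2 * (1 - η ^ 2) ^ 2 / (1 + η ^ 2) ^ 2 - 1)
      = (1 + η ^ 2) ^ (-(β-1)) - 8 * (1 + η ^ 2) ^ (-β) + 8 * (1 + η ^ 2) ^ (-(β+1)) := by
    intro η
    have h0 : (0:ℝ) < 1 + η ^ 2 := by positivity
    have e1 : (1 + η ^ 2) ^ (-(β-1)) = (1 + η ^ 2) ^ (-(β+1)) * (1 + η ^ 2) ^ (2:ℕ) := by
      rw [← Real.rpow_natCast (1 + η^2) 2, ← Real.rpow_add h0]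
      congr 1
      push_cast
      ring
    have e2 : (1 + η ^ 2) ^ (-β) = (1 + η ^ 2) ^ (-(β+1)) * (1 + η ^ 2) := by
      rw [← Real.rpow_add_one h0.ne']
      congr 1
      ring
    rw [show (1:ℝ) - β = -(β-1) by ring, e1, e2]
    have hne : ((1 + η ^ 2) ^ 2 : ℝ) ≠ 0 := by positivity
    field_simp
    ring
  have i12 : Integrable (fun η : ℝ => (1 + η ^ 2) ^ (-(β-1)) - 8 * (1 + η ^ 2) ^ (-β)) :=
    i1.sub (i2.const_mul 8)
  have hI : (∫ η : ℝ, (1 + η ^ 2) ^ (1 - β) * (2 * (1 - η ^ 2) ^ 2 / (1 + η ^ 2) ^ 2 - 1))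
      = (∫ η : ℝ, (1 + η ^ 2) ^ (-(β-1))) - 8 * (∫ η : ℝ, (1 + η ^ 2) ^ (-β))
        + 8 * (∫ η : ℝ, (1 + η ^ 2) ^ (-(β+1))) := by
    rw [integral_congr_ae (Filter.Eventually.of_forall hpt),
      integral_add i12 (i3.const_mul 8), integral_sub i1 (i2.const_mul 8),
      integral_const_mul, integral_const_mul]
  have gβ : Real.Gamma β = (β - 1) * Real.Gamma (β - 1) := by
    have h := Real.Gamma_add_one hb1.ne'
    rw [sub_add_cancel] at h
    exact h
  have gHalf : Real.Gamma (β - 1/2) = (β - 3/2) * Real.Gamma (β - 3/2) := by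
    have h := Real.Gamma_add_one hb32.ne'
    rw [show β - 3/2 + 1 = β - 1/2 by ring] at h
    exact h
  have gHalf2 : Real.Gamma (β + 1/2) = (β - 1/2) * Real.Gamma (β - 1/2) := by
    have h := Real.Gamma_add_one hb12.ne'
    rw [show β - 1/2 + 1 = β + 1/2 by ring] at h
    exact h
  have gβ1 : Real.Gamma (β + 1) = β * Real.Gamma β := Real.Gamma_add_one hβ0.ne'
  have J1 : (∫ η : ℝ, (1 + η ^ 2) ^ (-(β-1)))
      = Real.sqrt π * Real.Gamma (β - 3/2) / Real.Gamma (β - 1) := by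
    rw [integral_one_add_sq_rpow h1, show β - 1 - 1/2 = β - 3/2 by ring]
  have J2 : (∫ η : ℝ, (1 + η ^ 2) ^ (-β))
      = Real.sqrt π * ((β - 3/2) * Real.Gamma (β - 3/2)) / ((β - 1) * Real.Gamma (β - 1)) := by
    rw [integral_one_add_sq_rpow h2, show β - 1/2 = β - 1/2 by ring, gHalf, gβ]
  have J3 : (∫ η : ℝ, (1 + η ^ 2) ^ (-(β+1)))
      = Real.sqrt π * ((β - 1/2) * ((β - 3/2) * Real.Gamma (β - 3/2)))
        / (β * ((β - 1) * Real.Gamma (β - 1))) := by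
    rw [integral_one_add_sq_rpow h3, show β + 1 - 1/2 = β + 1/2 by ring, gHalf2, gHalf,
      gβ1, gβ]
  have hGhalf : Real.Gamma (β + 1/2) = (β - 1/2) * ((β - 3/2) * Real.Gamma (β - 3/2)) := by
    rw [gHalf2, gHalf]
  have h2pow : (2:ℝ) ^ (β - 1) = 2 * (2:ℝ) ^ (β - 2) := by
    rw [show β - 1 = (β - 2) + 1 by ring, Real.rpow_add_one two_ne_zero]
    ring
  have hppos : (0:ℝ) < p ^ (3/2 - β) := Real.rpow_pos_of_pos hp _
  have h2pos : (0:ℝ) < (2:ℝ) ^ (β - 2) := Real.rpow_pos_of_pos two_pos _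
  have hsqrtpi : (0:ℝ) < Real.sqrt π := Real.sqrt_pos.mpr Real.pi_pos
  have main : (2 : ℝ) ^ (β - 1) * p ^ (3 / 2 - β) * (β / 2) *
        (∫ η : ℝ, (1 + η ^ 2) ^ (1 - β) * (2 * (1 - η ^ 2) ^ 2 / (1 + η ^ 2) ^ 2 - 1))
      = Real.sqrt Real.pi * (2 : ℝ) ^ (β - 2) * p ^ (3 / 2 - β) * Real.Gamma (β + 1 / 2)
          * (β ^ 2 - 5 * β + 6)
        / ((β - 1) * (β - 3 / 2) * (β - 1 / 2) * Real.Gamma (β - 1)) := by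
    rw [hI, J1, J2, J3, hGhalf, h2pow]
    have n1 := hβ0.ne'
    have n2 := hb1.ne'
    have n3 := hb32.ne'
    have n4 := hb12.ne'
    have n5 := hG2.ne'
    rw [eq_div_iff (show ((β-1) * (β-3/2) * (β-1/2) * Real.Gamma (β-1)) ≠ 0 by positivity)]
    field_simp
    ring
  refine ⟨main, ?_⟩
  rw [main]
  have hD : ((β - 1) * (β - 3 / 2) * (β - 1 / 2) * Real.Gamma (β - 1)) ≠ 0 := by positivity
  have hC : Real.sqrt Real.pi * (2 : ℝ) ^ (β - 2) * p ^ (3 / 2 - β)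
      * Real.Gamma (β + 1 / 2) ≠ 0 := by
    have hg : 0 < Real.Gamma (β + 1/2) := Real.Gamma_pos_of_pos (by linarith)
    positivity
  rw [div_eq_zero_iff]
  constructor
  · rintro (h | h)
    · rcases mul_eq_zero.mp h with h' | h'
      · exact absurd h' hC
      · have hq : (β - 2) * (β - 3) = 0 := by linear_combination h'
        rcases mul_eq_zero.mp hq with h'' | h''
        · exact Or.inl (by linarith)
        · exact Or.inr (by linarith)
    · exact absurd h hD
  · rintro (h | h) <;> subst h <;> left <;> norm_num
end

section
/- For β > 3/2, the integral ∫_{-∞}^{∞} (1+η²)^(1-β) [2(1-η²)²/(1+η²)² - 1] dη vanishes if and only if β = 2 or β = 3. -/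
open Real MeasureTheory Filter Set

lemma int_aux {p : ℝ} (hp : 1/2 < p) :
    Integrable fun x : ℝ ↦ (1 + x ^ 2) ^ (-p) := by
  have h := integrable_rpow_neg_one_add_norm_sq (E := ℝ) (μ := volume) (r := 2 * p)
    (by simp; linarith)
  have : ∀ x : ℝ, (1 + ‖x‖ ^ 2 : ℝ) ^ (-(2 * p) / 2) = (1 + x ^ 2) ^ (-p) := by
    intro x
    rw [Real.norm_eq_abs, sq_abs]
    congr 1
    ring
  exact h.congr (Filter.Eventually.of_forall this)

lemma tendsto_aux {r : ℝ} (hr : r < -1/2) :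
    Tendsto (fun x : ℝ ↦ x * (1 + x ^ 2) ^ r) atTop (nhds 0) := by
  have hc : (0:ℝ) < -(1 + 2*r) := by linarith
  have hub := tendsto_rpow_neg_atTop hc
  simp only [neg_neg] at hub
  refine tendsto_of_tendsto_of_tendsto_of_le_of_le' tendsto_const_nhds hub ?_ ?_
  · filter_upwards [eventually_ge_atTop (1:ℝ)] with x hx
    have : (0:ℝ) < 1 + x ^ 2 := by positivity
    positivity
  · filter_upwards [eventually_ge_atTop (1:ℝ)] with x hx
    have hx0 : (0:ℝ) < x := by linarith
    have h1 : ((1:ℝ) + x ^ 2) ^ r ≤ (x ^ 2) ^ r := by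
      apply Real.rpow_le_rpow_of_nonpos (by positivity) (by linarith) (by linarith)
    have h2 : (x ^ 2 : ℝ) ^ r = x ^ (2 * r) := by
      rw [← Real.rpow_natCast x 2, ← Real.rpow_mul hx0.le]
      norm_num
    calc x * (1 + x ^ 2) ^ r ≤ x * (x ^ 2) ^ r := by
          apply mul_le_mul_of_nonneg_left h1 hx0.le
      _ = x ^ (1 + 2 * r) := by
          rw [h2, Real.rpow_add hx0, Real.rpow_one]

/-- For β > 3/2, ∫ (1+η²)^(1-β)[2(1-η²)²/(1+η²)² - 1] dη = 0 iff β = 2 or β = 3. -/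
theorem stmt19 (β : ℝ) (hβ : 3 / 2 < β) :
    (∫ η : ℝ, (1 + η ^ 2) ^ (1 - β) * (2 * (1 - η ^ 2) ^ 2 / (1 + η ^ 2) ^ 2 - 1)) = 0
      ↔ β = 2 ∨ β = 3 := by
  have hβ0 : β ≠ 0 := by intro h; rw [h] at hβ; norm_num at hβ
  have hβ1 : β - 1 ≠ 0 := by intro h; have : β = 1 := by linarith
                             rw [this] at hβ; norm_num at hβ
  -- integrability of the three power functions
  have int1 : Integrable fun x : ℝ ↦ (1 + x ^ 2) ^ (1 - β) := by
    have := int_aux (p := β - 1) (by linarith)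
    simpa [neg_sub] using this
  have int2 : Integrable fun x : ℝ ↦ (1 + x ^ 2) ^ (-β) := int_aux (by linarith)
  have int3 : Integrable fun x : ℝ ↦ (1 + x ^ 2) ^ (-β - 1) := by
    have := int_aux (p := β + 1) (by linarith)
    have e : -(β + 1) = -β - 1 := by ring
    simpa [e] using this
  -- rpow rewriting helpers
  have e1 : ∀ x : ℝ, (1 + x ^ 2) ^ (1 - β) = (1 + x ^ 2) * (1 + x ^ 2) ^ (-β) := by
    intro x
    have hs : (0:ℝ) < 1 + x ^ 2 := by positivity
    rw [show (1 - β) = 1 + (-β) by ring, Real.rpow_add hs, Real.rpow_one]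
  have e3 : ∀ x : ℝ, (1 + x ^ 2) ^ (-β - 1) = (1 + x ^ 2) ^ (-β) / (1 + x ^ 2) := by
    intro x
    have hs : (0:ℝ) < 1 + x ^ 2 := by positivity
    rw [show (-β - 1) = (-β) + (-1) by ring, Real.rpow_add hs, Real.rpow_neg_one]
    rfl
  -- identity A: the integrand as a combination of powers
  have idA : ∀ x : ℝ, (1 + x ^ 2) ^ (1 - β) * (2 * (1 - x ^ 2) ^ 2 / (1 + x ^ 2) ^ 2 - 1)
      = (1 + x ^ 2) ^ (1 - β) - 8 * (1 + x ^ 2) ^ (-β) + 8 * (1 + x ^ 2) ^ (-β - 1) := by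
    intro x
    have hs : (0:ℝ) < 1 + x ^ 2 := by positivity
    rw [e1 x, e3 x]
    field_simp
    ring
  -- the antiderivative G and its derivative g'
  set G : ℝ → ℝ := fun x ↦ 4 / β * (x * (1 + x ^ 2) ^ (-β))
      - 2 / (β * (β - 1)) * (x * (1 + x ^ 2) ^ (1 - β)) with hGdef
  set g' : ℝ → ℝ := fun x ↦
      4 / β * (1 * (1 + x ^ 2) ^ (-β) + x * (2 * x * (-β) * (1 + x ^ 2) ^ (-β - 1)))
      - 2 / (β * (β - 1)) *
        (1 * (1 + x ^ 2) ^ (1 - β) + x * (2 * x * (1 - β) * (1 + x ^ 2) ^ (1 - β - 1)))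
      with hg'def
  have hG : ∀ x, HasDerivAt G (g' x) x := by
    intro x
    have hs : (0:ℝ) < 1 + x ^ 2 := by positivity
    have hu : HasDerivAt (fun x : ℝ ↦ 1 + x ^ 2) (2 * x) x := by
      simpa using (hasDerivAt_pow 2 x).const_add 1
    have h1 : HasDerivAt (fun x : ℝ ↦ (1 + x ^ 2) ^ (-β))
        (2 * x * (-β) * (1 + x ^ 2) ^ (-β - 1)) x := hu.rpow_const (Or.inl hs.ne')
    have h2 : HasDerivAt (fun x : ℝ ↦ (1 + x ^ 2) ^ (1 - β))
        (2 * x * (1 - β) * (1 + x ^ 2) ^ (1 - β - 1)) x := hu.rpow_const (Or.inl hs.ne')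
    exact (HasDerivAt.const_mul (4 / β) ((hasDerivAt_id x).mul h1)).sub
      (HasDerivAt.const_mul (2 / (β * (β - 1))) ((hasDerivAt_id x).mul h2))
  -- identity B: g' as a combination of powers
  have idB : ∀ x : ℝ, g' x
      = (1 - (β - 2) * (β - 3) / (β * (β - 1))) * (1 + x ^ 2) ^ (1 - β)
        - 8 * (1 + x ^ 2) ^ (-β) + 8 * (1 + x ^ 2) ^ (-β - 1) := by
    intro x
    have hs : (0:ℝ) < 1 + x ^ 2 := by positivity
    rw [hg'def]
    simp only
    rw [show (1 - β - 1) = -β by ring, e1 x, e3 x]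
    field_simp
    ring
  -- g' is integrable
  have intg' : Integrable g' := by
    have h : Integrable fun x : ℝ ↦
        (1 - (β - 2) * (β - 3) / (β * (β - 1))) * (1 + x ^ 2) ^ (1 - β)
        - 8 * (1 + x ^ 2) ^ (-β) + 8 * (1 + x ^ 2) ^ (-β - 1) :=
      ((int1.const_mul _).sub (int2.const_mul 8)).add (int3.const_mul 8)
    exact h.congr (Eventually.of_forall fun x => (idB x).symm)
  -- limits of G at ±∞
  have hGtop : Tendsto G atTop (nhds 0) := by
    have t1 := (tendsto_aux (r := -β) (by linarith)).const_mul (4 / β)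
    have t2 := (tendsto_aux (r := 1 - β) (by linarith)).const_mul (2 / (β * (β - 1)))
    have := t1.sub t2
    simpa using this
  have hodd : ∀ x, G (-x) = -G x := by
    intro x
    rw [hGdef]
    simp only [neg_sq]
    ring
  have hGbot : Tendsto G atBot (nhds 0) := by
    have h := hGtop.comp tendsto_neg_atBot_atTop
    have h2 := h.neg
    simp only [neg_zero] at h2
    exact h2.congr fun x => by simp only [Function.comp_apply, hodd, neg_neg]
  -- ∫ g' = 0
  have hint0 : (∫ x : ℝ, g' x) = 0 := by
    have := integral_of_hasDerivAt_of_tendsto hG intg' hGbot hGtop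
    simpa using this
  -- main computation
  have key : (∫ η : ℝ, (1 + η ^ 2) ^ (1 - β) * (2 * (1 - η ^ 2) ^ 2 / (1 + η ^ 2) ^ 2 - 1))
      = (β - 2) * (β - 3) / (β * (β - 1)) * ∫ x : ℝ, (1 + x ^ 2) ^ (1 - β) := by
    have hpt : ∀ x : ℝ, (1 + x ^ 2) ^ (1 - β) * (2 * (1 - x ^ 2) ^ 2 / (1 + x ^ 2) ^ 2 - 1)
        = g' x + (β - 2) * (β - 3) / (β * (β - 1)) * (1 + x ^ 2) ^ (1 - β) := by
      intro x
      rw [idA x, idB x]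
      ring
    rw [integral_congr_ae (Eventually.of_forall hpt),
      integral_add intg' (int1.const_mul _), hint0, MeasureTheory.integral_const_mul, zero_add]
  -- positivity of ∫ (1+x²)^(1-β)
  have hpos : 0 < ∫ x : ℝ, (1 + x ^ 2) ^ (1 - β) := by
    rw [integral_pos_iff_support_of_nonneg
      (fun x => (Real.rpow_pos_of_pos (by positivity) _).le) int1]
    have hsupp : Function.support (fun x : ℝ ↦ (1 + x ^ 2) ^ (1 - β)) = Set.univ :=
      Set.eq_univ_of_forall fun x => (Real.rpow_pos_of_pos (by positivity) _).ne'
    rw [hsupp]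
    simp [Real.volume_univ]
  rw [key]
  constructor
  · intro h
    rcases mul_eq_zero.mp h with h | h
    · rw [div_eq_zero_iff] at h
      rcases h with h | h
      · rcases mul_eq_zero.mp h with h | h
        · left; linarith
        · right; linarith
      · exact absurd h (mul_ne_zero hβ0 hβ1)
    · exact absurd h hpos.ne'
  · rintro (rfl | rfl) <;> norm_num
end
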